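/- For every real α > 0 and every quaternion p, the two-sided Laplace transform of the Gaussian is: ∫_{−∞}^{∞} exp(−(α·t²)·1 − t·p) dt = (π/α)^{1/2}·exp(p²/(4α)), where the integrand is the quaternionic exponential of the quaternion −α·t² − t·p and p² is the quaternion square. (Paper's Example 3.13.) -/

import Mathlib

open MeasureTheory Real
open scoped Quaternion

/-!
Every quaternion `p` lies in a copy of `ℂ` inside `ℍ`: writing `p = re p + ‖im p‖ • u` with
`u² = -1`, the `ℝ`-algebra map `ℂ → ℍ` sending `I` to `u` hits `p`. A continuous algebra map
commutes with `exp` and with the Bochner integral, so the quaternionic formula is the image of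
the classical complex one, `∫ exp (-α t² - t z) dt = √(π/α) exp (z² / (4α))`.
-/

theorem Quaternion.mul_self_eq_neg_one_of_re_eq_zero {u : ℍ[ℝ]} (hre : u.re = 0) (hu : ‖u‖ = 1) :
    u * u = -1 := by
  rw [← sq, sq_eq_neg_normSq.mpr hre, normSq_eq_norm_mul_self, hu, mul_one, coe_one]

theorem Quaternion.exists_mul_self_eq_neg_one_smul_eq {q : ℍ[ℝ]} (hq : q.re = 0) :
    ∃ u : ℍ[ℝ], u * u = -1 ∧ q = ‖q‖ • u := by
  by_cases h : q = 0
  · let i : ℍ[ℝ] := ⟨0, 1, 0, 0⟩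
    have hi : ‖i‖ = 1 := by
      rw [← sq_eq_sq₀ (norm_nonneg _) zero_le_one, sq, ← normSq_eq_norm_mul_self, normSq_def']
      simp [i]
    exact ⟨i, mul_self_eq_neg_one_of_re_eq_zero rfl hi, by simp [h]⟩
  · refine ⟨‖q‖⁻¹ • q, mul_self_eq_neg_one_of_re_eq_zero (by simp [hq]) ?_, ?_⟩
    · rw [norm_smul, norm_inv, norm_norm, inv_mul_cancel₀ (norm_ne_zero_iff.mpr h)]
    · rw [smul_inv_smul₀ (norm_ne_zero_iff.mpr h)]

theorem Quaternion.exists_algHom_complex_apply_eq (p : ℍ[ℝ]) :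
    ∃ (φ : ℂ →ₐ[ℝ] ℍ[ℝ]) (z : ℂ), φ z = p := by
  obtain ⟨u, hu, him⟩ := exists_mul_self_eq_neg_one_smul_eq (re_im p)
  refine ⟨Complex.liftAux u hu, ⟨p.re, ‖p.im‖⟩, ?_⟩
  rw [Complex.liftAux_apply, ← him]
  exact p.re_add_im

theorem integrable_cexp_neg_mul_sq_sub_mul {α : ℝ} (hα : 0 < α) (z : ℂ) :
    Integrable fun t : ℝ ↦ Complex.exp (-(α * t ^ 2) - t * z) :=
  (integrable_cexp_quadratic (b := α) (by simpa using hα) (-z) 0).congr <|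
    ae_of_all _ fun t ↦ by ring_nf

theorem integral_cexp_neg_mul_sq_sub_mul {α : ℝ} (hα : 0 < α) (z : ℂ) :
    ∫ t : ℝ, Complex.exp (-(α * t ^ 2) - t * z) = √(π / α) * Complex.exp (z ^ 2 / (4 * α)) := by
  have hα' : (α : ℂ) ≠ 0 := by exact_mod_cast hα.ne'
  convert integral_cexp_quadratic (b := -α) (by simpa using hα) (-z) 0 using 2
  · ext t
    ring_nf
  · rw [neg_neg, sqrt_eq_rpow, Complex.ofReal_cpow (div_pos pi_pos hα).le]
    norm_num
  · field_simp
    ring_nf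

theorem integral_exp_neg_mul_sq_smul_one_sub_smul_algHom {A : Type*} [NormedRing A]
    [NormedAlgebra ℝ A] [CompleteSpace A] {α : ℝ} (hα : 0 < α) (z : ℂ) (φ : ℂ →ₐ[ℝ] A)
    (hφ : Continuous φ) :
    ∫ t : ℝ, NormedSpace.exp ((-(α * t ^ 2)) • (1 : A) - t • φ z) =
      √(π / α) • NormedSpace.exp ((4 * α)⁻¹ • (φ z) ^ 2) := by
  -- `map_exp` asks for a `ℚ`-algebra structure on `A`, which `exp` itself does not depend on.
  let _ : Algebra ℚ A := Algebra.compHom A (algebraMap ℚ ℝ)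
  let L : ℂ →L[ℝ] A := ⟨φ.toLinearMap, hφ⟩
  have hL : ∀ w, L (Complex.exp w) = NormedSpace.exp (φ w) := fun w ↦ by
    rw [Complex.exp_eq_exp_ℂ]
    exact NormedSpace.map_exp φ hφ w
  have hsq : z ^ 2 / (4 * α) = ((4 * α)⁻¹ : ℝ) • z ^ 2 := by
    rw [Complex.real_smul]
    push_cast
    ring
  calc ∫ t : ℝ, NormedSpace.exp ((-(α * t ^ 2)) • (1 : A) - t • φ z)
      = ∫ t : ℝ, L (Complex.exp (-(α * t ^ 2) - t * z)) := by
        congr 1; ext t; rw [hL]; simp [Algebra.smul_def]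
    _ = L (∫ t : ℝ, Complex.exp (-(α * t ^ 2) - t * z)) :=
        L.integral_comp_comm (integrable_cexp_neg_mul_sq_sub_mul hα z)
    _ = √(π / α) • NormedSpace.exp ((4 * α)⁻¹ • (φ z) ^ 2) := by
        rw [integral_cexp_neg_mul_sq_sub_mul hα, ← Complex.real_smul, L.map_smul, hL, hsq,
          map_smul, map_pow]

theorem gaussian_two_sided_laplace (α : ℝ) (hα : 0 < α) (p : Quaternion ℝ) :
    (∫ t : ℝ, NormedSpace.exp ((-(α * t ^ 2)) • (1 : Quaternion ℝ) - t • p)) =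
      Real.sqrt (π / α) • NormedSpace.exp ((4 * α)⁻¹ • (p ^ 2)) := by
  obtain ⟨φ, z, rfl⟩ := p.exists_algHom_complex_apply_eq
  exact integral_exp_neg_mul_sq_smul_one_sub_smul_algHom hα z φ
    φ.toLinearMap.continuous_of_finiteDimensional
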